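/- Let H be an atomic monoid with Δ(H) ≠ ∅. Then max Δ(H) ≤ max Δ̃(A(M_H)), i.e. the maximum of the set of distances of H is at most the maximal value ||x| − |y|| over atoms (x, y) of the monoid of relations with x ≠ y. -/

import Mathlib

open Multiset
open scoped Classical ENNReal

/-- The set of atoms (irreducible elements) of a reduced monoid `M`. -/
abbrev Atom (M : Type) [CancelCommMonoid M] : Type := {u : M // Irreducible u}

/-- The factorization homomorphism `π : Z(H) → H`, where the factorization monoid
`Z(H)` is realized as the free commutative monoid (multiset) over the atoms. -/
def fprod {M : Type} [CancelCommMonoid M] (z : Multiset (Atom M)) : M :=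
  (z.map Subtype.val).prod

/-- The set of factorizations `Z(a)` of `a`. -/
def Zf {M : Type} [CancelCommMonoid M] (a : M) : Set (Multiset (Atom M)) :=
  {z | fprod z = a}

/-- `M` is reduced: the only unit is `1`. -/
def Reduced (M : Type) [CancelCommMonoid M] : Prop := ∀ u : M, IsUnit u → u = 1

/-- `M` is atomic: every non-unit is a product of atoms. -/
def Atomic (M : Type) [CancelCommMonoid M] : Prop :=
  ∀ a : M, ¬ IsUnit a → ∃ z : Multiset (Atom M), fprod z = a

/-- The distance between two factorizations. -/
noncomputable def fdist {M : Type} [CancelCommMonoid M] (z z' : Multiset (Atom M)) : ℕ :=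
  max (card (z - z')) (card (z' - z))

/-- The catenary degree `c(a)`: the least `N` such that any two factorizations of `a`
can be concatenated by an `N`-chain of factorizations of `a`. -/
noncomputable def cat {M : Type} [CancelCommMonoid M] (a : M) : ℕ∞ :=
  sInf {N : ℕ∞ | ∀ z ∈ Zf a, ∀ z' ∈ Zf a,
    Relation.ReflTransGen (fun u v => v ∈ Zf a ∧ (fdist u v : ℕ∞) ≤ N) z z'}

/-- The catenary degree `c(H)`. -/
noncomputable def catH (M : Type) [CancelCommMonoid M] : ℕ∞ := ⨆ a : M, cat a

/-- The `R`-relation on factorizations of `a`: two factorizations are `R`-related if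
they can be joined by a chain of factorizations of `a` whose consecutive members have a
common atom (the degenerate case `z = z' = 1` is the reflexivity case). -/
def RRel {M : Type} [CancelCommMonoid M] (a : M) :
    Multiset (Atom M) → Multiset (Atom M) → Prop :=
  Relation.ReflTransGen (fun u v => u ∈ Zf a ∧ v ∈ Zf a ∧ u ∩ v ≠ 0)

/-- `|R_a| ≥ 2`: `a` has at least two `R`-equivalence classes of factorizations. -/
def TwoClasses {M : Type} [CancelCommMonoid M] (a : M) : Prop :=
  ∃ z ∈ Zf a, ∃ z' ∈ Zf a, ¬ RRel a z z'

/-- `μ(a)`: the supremum over the `R`-classes `ρ` of `Z(a)` of `min {|z| : z ∈ ρ}`. -/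
noncomputable def mu {M : Type} [CancelCommMonoid M] (a : M) : ℕ∞ :=
  ⨆ z ∈ Zf a, ⨅ w ∈ {w | w ∈ Zf a ∧ RRel a z w}, (card w : ℕ∞)

/-- `μ(H) = sup {μ(a) : a ∈ H, |R_a| ≥ 2}`. -/
noncomputable def muH (M : Type) [CancelCommMonoid M] : ℕ∞ :=
  ⨆ a : M, ⨆ (_ : TwoClasses a), mu a

/-- The monoid of relations `M_H ⊆ Z(H) × Z(H)`. -/
def MHset (M : Type) [CancelCommMonoid M] :
    Set (Multiset (Atom M) × Multiset (Atom M)) :=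
  {p | fprod p.1 = fprod p.2}

/-- Atoms of the (reduced) monoid of relations `M_H`. -/
def IsRelAtom {M : Type} [CancelCommMonoid M]
    (p : Multiset (Atom M) × Multiset (Atom M)) : Prop :=
  p ∈ MHset M ∧ p ≠ 0 ∧
    ∀ q r, q ∈ MHset M → r ∈ MHset M → p = q + r → q = 0 ∨ r = 0

/-- The set of lengths `L(a)`. -/
def Lset {M : Type} [CancelCommMonoid M] (a : M) : Set ℕ := {n | ∃ z ∈ Zf a, card z = n}

/-- The set of distances `Δ(H)`: positive integers `d` such that some length set `L(a)`
contains consecutive elements `l, l + d`. -/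
def DeltaH (M : Type) [CancelCommMonoid M] : Set ℕ :=
  {d | 0 < d ∧ ∃ a : M, ∃ l, l ∈ Lset a ∧ Lset a ∩ Set.Icc l (l + d) = {l, l + d}}

/-- `Δ̃(X) = {||x| - |y|| : (x, y) ∈ X, x ≠ y}` for a subset `X ⊆ M_H`. -/
def Dtil {M : Type} [CancelCommMonoid M]
    (X : Set (Multiset (Atom M) × Multiset (Atom M))) : Set ℕ :=
  {d | ∃ p ∈ X, p.1 ≠ p.2 ∧ d = Nat.dist (card p.1) (card p.2)}

/-
If `l` and `l + d` are adjacent lengths of `a`, with factorizations `z` and `z'`, write the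
relation `(z, z')` as a sum `q₁ + ⋯ + qₙ` of atoms of `M_H`. Replacing `qᵢ.1` by `qᵢ.2` in `z`
for `i ≤ k` gives a factorization of `a` of length `|z| + Σ_{i ≤ k} (|qᵢ.2| - |qᵢ.1|)`.
These lengths run from `l` to `l + d` without ever landing strictly between them, so some single
step `|qᵢ.2| - |qᵢ.1|` is at least `d`.
-/

theorem List.exists_le_of_take_sum_notMem_Ioo {L : List ℤ} {s l d : ℤ} (hd : 0 < d)
    (hs : s ≤ l) (hend : l + d ≤ s + L.sum)
    (havoid : ∀ k, s + (L.take k).sum ∉ Set.Ioo l (l + d)) : ∃ x ∈ L, d ≤ x := by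
  induction L generalizing s with
  | nil => simp at hend; omega
  | cons x L ih =>
    have hx : s + x ∉ Set.Ioo l (l + d) := by simpa using havoid 1
    by_cases hsx : s + x ≤ l
    · obtain ⟨y, hy, hdy⟩ := ih hsx (by simpa [add_assoc] using hend)
        (fun k => by simpa [add_assoc] using havoid (k + 1))
      exact ⟨y, List.mem_cons_of_mem x hy, hdy⟩
    · exact ⟨x, List.mem_cons_self, by simp only [Set.mem_Ioo, not_and_or] at hx; omega⟩

section CardDiff

variable {α : Type*}

def cardDiff : Multiset α × Multiset α →+ ℤ where
  toFun p := card p.2 - card p.1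
  map_zero' := by simp
  map_add' p q := by simp only [Prod.fst_add, Prod.snd_add, card_add]; push_cast; ring

@[simp]
lemma cardDiff_apply (p : Multiset α × Multiset α) : cardDiff p = card p.2 - card p.1 := rfl

lemma cardDiff_le_dist (p : Multiset α × Multiset α) :
    cardDiff p ≤ Nat.dist (card p.1) (card p.2) := by
  rw [cardDiff_apply]
  unfold Nat.dist
  omega

lemma card_fst_add_card_snd_pos {p : Multiset α × Multiset α} (hp : p ≠ 0) :
    0 < card p.1 + card p.2 := by
  by_contra! h
  exact hp (Prod.ext (card_eq_zero.mp (by omega)) (card_eq_zero.mp (by omega)))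

end CardDiff

section Relations

variable {M : Type} [CancelCommMonoid M]

lemma fprod_add (u v : Multiset (Atom M)) : fprod (u + v) = fprod u * fprod v := by
  simp [fprod]

variable (M) in
def MHsubmonoid : AddSubmonoid (Multiset (Atom M) × Multiset (Atom M)) where
  carrier := MHset M
  zero_mem' := rfl
  add_mem' {p q} hp hq := by
    simp only [MHset, Set.mem_ofPred_eq, Prod.fst_add, Prod.snd_add, fprod_add] at *
    rw [hp, hq]

lemma exists_list_isRelAtom_sum {p : Multiset (Atom M) × Multiset (Atom M)}
    (hp : p ∈ MHset M) :
    ∃ L : List _, (∀ q ∈ L, IsRelAtom q) ∧ L.sum = p := by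
  induction hn : card p.1 + card p.2 using Nat.strong_induction_on generalizing p with
  | _ n ih =>
    by_cases hp0 : p = 0
    · exact ⟨[], by simp, hp0.symm⟩
    by_cases hatom : IsRelAtom p
    · exact ⟨[p], by simpa using hatom, by simp⟩
    obtain ⟨q, r, hq, hr, rfl, hq0, hr0⟩ : ∃ q r, q ∈ MHset M ∧ r ∈ MHset M ∧ p = q + r ∧
        q ≠ 0 ∧ r ≠ 0 := by
      simpa [IsRelAtom, hp, hp0] using hatom
    have := card_fst_add_card_snd_pos hq0
    have := card_fst_add_card_snd_pos hr0
    simp only [Prod.fst_add, Prod.snd_add, card_add] at hn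
    obtain ⟨Lq, hLq, rfl⟩ := ih _ (by omega) hq rfl
    obtain ⟨Lr, hLr, rfl⟩ := ih _ (by omega) hr rfl
    refine ⟨Lq ++ Lr, fun q hq => ?_, by simp⟩
    rcases List.mem_append.mp hq with hq | hq
    exacts [hLq q hq, hLr q hq]

lemma exists_mem_Lset_eq_card_add_take_sum {a : M} {z z' : Multiset (Atom M)}
    {L : List (Multiset (Atom M) × Multiset (Atom M))} (hL : ∀ q ∈ L, q ∈ MHset M)
    (hsum : L.sum = (z, z')) (hz : z ∈ Zf a) (k : ℕ) :
    ∃ n ∈ Lset a, (n : ℤ) = card z + ((L.map cardDiff).take k).sum := by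
  set P := (L.take k).sum
  set Q := (L.drop k).sum
  have hP : fprod P.1 = fprod P.2 :=
    list_sum_mem (S := MHsubmonoid M) fun q hq => hL q (List.mem_of_mem_take hq)
  have hz : z = P.1 + Q.1 := by rw [← Prod.fst_add, List.sum_take_add_sum_drop, hsum]
  refine ⟨card (P.2 + Q.1), ⟨P.2 + Q.1, ?_, rfl⟩, ?_⟩
  · rwa [Zf, Set.mem_ofPred_eq, fprod_add, ← hP, ← fprod_add, ← hz]
  · rw [← List.map_take, ← map_list_sum, cardDiff_apply, hz]
    simp only [card_add]
    push_cast
    ring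

end Relations

theorem max_DeltaH_le_general (M : Type) [CancelCommMonoid M] :
    (⨆ d ∈ DeltaH M, (d : ℕ∞)) ≤ ⨆ d ∈ Dtil {p : Multiset (Atom M) × Multiset (Atom M) | IsRelAtom p}, (d : ℕ∞) := by
  refine iSup₂_le fun d ⟨hd, a, l, hl, hgap⟩ => ?_
  have hld : l + d ∈ Lset a ∩ Set.Icc l (l + d) := by rw [hgap]; simp
  obtain ⟨⟨z, hz, rfl⟩, ⟨z', hz', hz'l⟩⟩ := And.intro hl hld.1
  obtain ⟨L, hL, hLsum⟩ :=
    exists_list_isRelAtom_sum (show (z, z') ∈ MHset M from hz.trans hz'.symm)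
  have hsteps (k : ℕ) :
      (card z : ℤ) + ((L.map cardDiff).take k).sum ∉ Set.Ioo (card z : ℤ) (card z + d) := by
    obtain ⟨n, hn, hnk⟩ :=
      exists_mem_Lset_eq_card_add_take_sum (fun q hq => (hL q hq).1) hLsum hz k
    rw [← hnk, Set.mem_Ioo]
    intro hlt
    have : n ∈ Lset a ∩ Set.Icc (card z) (card z + d) := ⟨hn, by omega, by omega⟩
    rw [hgap] at this
    rcases this with rfl | rfl <;> omega
  obtain ⟨x, hx, hdx⟩ := List.exists_le_of_take_sum_notMem_Ioo (by exact_mod_cast hd) le_rfl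
    (by rw [← map_list_sum, hLsum, cardDiff_apply, hz'l]; push_cast; omega) hsteps
  obtain ⟨q, hq, rfl⟩ := List.mem_map.mp hx
  have hdist : d ≤ Nat.dist (card q.1) (card q.2) := by
    exact_mod_cast hdx.trans (cardDiff_le_dist q)
  refine le_iSup₂_of_le _ ⟨q, hL q hq, fun h => ?_, rfl⟩ (by exact_mod_cast hdist)
  rw [h, Nat.dist_self] at hdist
  omega

/-- **Proposition 4.5.3 (second part).** If `Δ(H) ≠ ∅`, then
`max Δ(H) ≤ max Δ̃(A(M_H))`. -/
theorem max_DeltaH_le (M : Type) [CancelCommMonoid M]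
    (hred : Reduced M) (hat : Atomic M) (hne : (DeltaH M).Nonempty) :
    (⨆ d ∈ DeltaH M, (d : ℕ∞)) ≤ ⨆ d ∈ Dtil {p : Multiset (Atom M) × Multiset (Atom M) | IsRelAtom p}, (d : ℕ∞) :=
  max_DeltaH_le_general M
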